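/- Let $(s_n)$ be a real sequence with $s_n = O(\sqrt{n} \log\log n)$ (for $n \ge 3$) and suppose $\sum_{n=2}^\infty \frac{s_n^2}{n^2 \log n}$ converges absolutely. Then the series $\sum_{n=2}^\infty \frac{s_{n+1}^2 - s_n^2}{n \log n}$ converges (has convergent partial sums). -/

import Mathlib

open Filter Topology

/-!
Abel summation with weights `wₙ = (n log n)⁻¹` writes the partial sums as
`s_N² w_N - s₂² w₂ + ∑ s_{n+1}² (wₙ - w_{n+1})`. The growth bound gives
`s_N² w_N = O((log log N)² / log N) → 0`, and `wₙ - w_{n+1} = O(1 / ((n+1)² log (n+1)))`, so the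
remaining series is dominated by `∑ s_{n}² / (n² log n)`.
-/

open Finset in
theorem tendsto_sum_range_sub_mul_of_summable {R : Type*} [Ring R] [TopologicalSpace R]
    [IsTopologicalAddGroup R] {a w : ℕ → R} {l : R}
    (hlim : Tendsto (fun n => a n * w n) atTop (𝓝 l))
    (hsum : Summable fun n => a (n + 1) * (w n - w (n + 1))) :
    Tendsto (fun N => ∑ n ∈ range N, (a (n + 1) - a n) * w n) atTop
      (𝓝 (l - a 0 * w 0 + ∑' n, a (n + 1) * (w n - w (n + 1)))) := by
  have abel : ∀ N, ∑ n ∈ range N, (a (n + 1) - a n) * w n =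
      a N * w N - a 0 * w 0 + ∑ n ∈ range N, a (n + 1) * (w n - w (n + 1)) := by
    intro N
    rw [← sum_range_sub (fun n => a n * w n), ← sum_add_distrib]
    refine sum_congr rfl fun n _ => ?_
    noncomm_ring
  simp only [abel]
  exact (hlim.sub_const _).add hsum.tendsto_sum_tsum_nat

namespace Real

theorem mul_log_add_one_sub_mul_log_le {x : ℝ} (hx : 0 < x) :
    (x + 1) * log (x + 1) - x * log x ≤ log (x + 1) + 1 := by
  have hlog : log (x + 1) - log x ≤ 1 / x := by
    have := log_le_sub_one_of_pos (show 0 < (x + 1) / x by positivity)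
    rw [log_div (by positivity) hx.ne'] at this
    calc log (x + 1) - log x ≤ (x + 1) / x - 1 := this
      _ = 1 / x := by field_simp; ring
  have : x * (log (x + 1) - log x) ≤ 1 := by
    calc x * (log (x + 1) - log x) ≤ x * (1 / x) := by gcongr
      _ = 1 := by field_simp
  linarith

theorem one_le_log_add_one {x : ℝ} (hx : 2 ≤ x) : 1 ≤ log (x + 1) := by
  rw [le_log_iff_exp_le (by linarith)]
  linarith [exp_one_lt_d9]

theorem inv_mul_log_sub_inv_mul_log_add_one_le {x : ℝ} (hx : 2 ≤ x) :
    (x * log x)⁻¹ - ((x + 1) * log (x + 1))⁻¹ ≤ 8 / ((x + 1) ^ 2 * log (x + 1)) := by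
  have hL := one_le_log_add_one hx
  have hlogx : log (x + 1) / 2 ≤ log x := by
    have : log (x + 1) ≤ log (x ^ 2) := log_le_log (by linarith) (by nlinarith)
    rw [log_pow] at this
    push_cast at this
    linarith
  have hden : (x + 1) ^ 2 * log (x + 1) ^ 2 / 4 ≤ (x * log x) * ((x + 1) * log (x + 1)) := by
    calc (x + 1) ^ 2 * log (x + 1) ^ 2 / 4
        = ((x + 1) / 2 * (log (x + 1) / 2)) * ((x + 1) * log (x + 1)) := by ring
      _ ≤ (x * log x) * ((x + 1) * log (x + 1)) := by
        gcongr
        linarith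
  have hlog : 0 < log x := log_pos (by linarith)
  rw [inv_sub_inv (by positivity) (by positivity)]
  calc ((x + 1) * log (x + 1) - x * log x) / (x * log x * ((x + 1) * log (x + 1)))
      ≤ (2 * log (x + 1)) / ((x + 1) ^ 2 * log (x + 1) ^ 2 / 4) := by
        gcongr
        linarith [mul_log_add_one_sub_mul_log_le (x := x) (by linarith)]
    _ = 8 / ((x + 1) ^ 2 * log (x + 1)) := by field_simp; ring

theorem inv_mul_log_add_one_le {x : ℝ} (hx : 1 < x) :
    ((x + 1) * log (x + 1))⁻¹ ≤ (x * log x)⁻¹ := by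
  have := log_pos hx
  gcongr <;> linarith

theorem tendsto_log_log_sq_div_log :
    Tendsto (fun x => log (log x) ^ 2 / log x) atTop (𝓝 0) := by
  simpa [Function.comp_def] using
    (tendsto_pow_log_div_mul_add_atTop 1 0 2 one_ne_zero).comp tendsto_log_atTop

end Real

open Real

theorem summable_mul_inv_mul_log_sub_inv_mul_log_succ {a : ℕ → ℝ}
    (ha : Summable fun n : ℕ => |a n / ((n : ℝ) ^ 2 * log n)|) :
    Summable fun n : ℕ =>
      a (n + 1) * (((n : ℝ) * log n)⁻¹ - ((n + 1 : ℕ) * log (n + 1 : ℕ))⁻¹) := by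
  refine .of_norm_bounded_eventually_nat (((summable_nat_add_iff 1).2 ha).mul_left 8) ?_
  filter_upwards [eventually_ge_atTop 2] with n hn
  have hn' : (2 : ℝ) ≤ n := by exact_mod_cast hn
  have hL := one_le_log_add_one hn'
  have hpos : 0 < ((n : ℝ) + 1) ^ 2 * log (n + 1) := by positivity
  push_cast
  rw [norm_mul, Real.norm_eq_abs, Real.norm_eq_abs, abs_div, abs_of_pos hpos,
    abs_of_nonneg (sub_nonneg.2 (inv_mul_log_add_one_le (by linarith)))]
  calc |a (n + 1)| * (((n : ℝ) * log n)⁻¹ - ((n + 1) * log (n + 1))⁻¹)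
      ≤ |a (n + 1)| * (8 / ((n + 1) ^ 2 * log (n + 1))) := by
        gcongr
        exact inv_mul_log_sub_inv_mul_log_add_one_le hn'
    _ = 8 * (|a (n + 1)| / ((n + 1) ^ 2 * log (n + 1))) := by ring

theorem tendsto_sq_mul_inv_mul_log_of_abs_le {s : ℕ → ℝ} {C : ℝ}
    (hC : ∀ n : ℕ, 3 ≤ n → |s n| ≤ C * (√n * log (log n))) :
    Tendsto (fun n : ℕ => s n ^ 2 * ((n : ℝ) * log n)⁻¹) atTop (𝓝 0) := by
  have hbound := (tendsto_log_log_sq_div_log.comp tendsto_natCast_atTop_atTop).const_mul (C ^ 2)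
  rw [mul_zero] at hbound
  refine squeeze_zero_norm' ?_ hbound
  filter_upwards [eventually_ge_atTop 3] with n hn
  have hsq : s n ^ 2 ≤ (C * (√n * log (log n))) ^ 2 := by
    rw [← sq_abs]
    exact pow_le_pow_left₀ (abs_nonneg _) (hC n hn) 2
  calc ‖s n ^ 2 * ((n : ℝ) * log n)⁻¹‖ = s n ^ 2 * ((n : ℝ) * log n)⁻¹ := by
        rw [Real.norm_eq_abs, abs_of_nonneg (by positivity)]
    _ ≤ (C * (√n * log (log n))) ^ 2 * ((n : ℝ) * log n)⁻¹ := by gcongr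
    _ = C ^ 2 * (log (log n) ^ 2 / log n) := by
        rw [mul_pow, mul_pow, sq_sqrt (by positivity)]
        field_simp

/-- If `sₙ = O(√n log log n)` and `∑ sₙ²/(n² log n)` converges absolutely, then
`∑ (s_{n+1}² - sₙ²)/(n log n)` has convergent partial sums. -/
theorem stmt_5 (s : ℕ → ℝ)
    (hbig : ∃ C : ℝ, ∀ n : ℕ, 3 ≤ n → |s n| ≤ C * (Real.sqrt n * Real.log (Real.log n)))
    (hsum : Summable (fun n : ℕ => |s n ^ 2 / ((n : ℝ) ^ 2 * Real.log n)|)) :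
    ∃ L : ℝ, Tendsto
      (fun N => ∑ n ∈ Finset.Ico 2 N, (s (n + 1) ^ 2 - s n ^ 2) / ((n : ℝ) * Real.log n))
      atTop (𝓝 L) := by
  obtain ⟨C, hC⟩ := hbig
  have hlim := tendsto_sum_range_sub_mul_of_summable (a := fun n => s n ^ 2)
    (tendsto_sq_mul_inv_mul_log_of_abs_le hC) (summable_mul_inv_mul_log_sub_inv_mul_log_succ hsum)
  refine ⟨_, hlim.congr' ?_⟩
  filter_upwards [eventually_ge_atTop 2] with N hN
  -- the terms `n = 0, 1` vanish because `n * log n = 0` there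
  rw [← Finset.sum_range_add_sum_Ico _ hN]
  simp [div_eq_mul_inv, Finset.sum_range_succ]
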